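/- arXiv:math/0302153 — 3 statements merged into one kernel-verified Lean document; each statement's English description precedes it below -/
import Mathlib

section
/- Let K be a field with a valuation v, let r be a positive rational, and let M be an n×n matrix over K such that (a) for each 1 ≤ m ≤ n, the leading principal m×m minor det(Mₘ) has valuation r·m(m+1)/2, and (b) every entry in column j has valuation at least r·j. Write det(1 − tM) = ∑_{i=0}^n cᵢ tⁱ. Then for every 1 ≤ m ≤ n, v(cₘ) = r·m(m+1)/2. -/
open Polynomial Matrix Finset

/-!
Expanding the determinant gives `cₘ = (-1)ᵐ ∑_{#s = m} det M_s`, a signed sum of principal minors.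
The column bounds give `v (det M_s) ≥ r ∑_{j ∈ s} (j + 1)`, and among index sets of size `m` this
weight is strictly smallest for the initial segment, whose minor has valuation exactly
`r·m(m+1)/2` by hypothesis. So the leading minor is the unique term of least valuation in the sum,
and it determines `v (cₘ)`.
-/

namespace Finset

theorem sum_lt_sum_of_isLowerSet {α β : Type*} [LinearOrder α] [AddCommMonoid β] [PartialOrder β]
    [IsOrderedCancelAddMonoid β] {s t : Finset α} {f : α → β} (hf : StrictMono f)
    (ht : IsLowerSet (t : Set α)) (hcard : #s = #t) (hst : s ≠ t) :
    ∑ i ∈ t, f i < ∑ i ∈ s, f i := by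
  classical
  have hne : (s \ t).Nonempty :=
    sdiff_nonempty.2 fun hsub => hst (eq_of_subset_of_card_le hsub hcard.ge)
  have hcard' : #(t \ s) = #(s \ t) := card_sdiff_comm hcard.symm
  have hne' : (t \ s).Nonempty := by
    rw [← card_pos, hcard']
    exact hne.card_pos
  -- `t` is a lower set, so every element of `t \ s` lies below every element of `s \ t`
  set j := (s \ t).min' hne
  have hlt : ∀ i ∈ t \ s, f i < f j := fun i hi =>
    hf (lt_of_not_ge fun hji => (mem_sdiff.1 (min'_mem _ hne)).2 (ht hji (mem_sdiff.1 hi).1))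
  calc ∑ i ∈ t, f i = ∑ i ∈ t ∩ s, f i + ∑ i ∈ t \ s, f i := (sum_inter_add_sum_sdiff t s f).symm
    _ < ∑ i ∈ t ∩ s, f i + #(t \ s) • f j := by
        rw [← sum_const]
        gcongr with i hi
        exact hlt i hi
    _ = ∑ i ∈ s ∩ t, f i + #(s \ t) • f j := by rw [inter_comm, hcard']
    _ ≤ ∑ i ∈ s ∩ t, f i + ∑ i ∈ s \ t, f i := by
        gcongr
        exact card_nsmul_le_sum _ _ _ fun i hi => hf.monotone (min'_le _ _ hi)
    _ = ∑ i ∈ s, f i := sum_inter_add_sum_sdiff s t f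

theorem sum_range_cast_add_one (k : ℕ) : ∑ i ∈ range k, ((i : ℚ) + 1) = k * (k + 1) / 2 := by
  induction k with
  | zero => simp
  | succ k ih =>
    rw [sum_range_succ, ih]
    push_cast
    ring

end Finset

theorem Fin.isLowerSet_map_castLEEmb {m n : ℕ} (h : m ≤ n) :
    IsLowerSet ((univ.map (Fin.castLEEmb h) : Finset (Fin n)) : Set (Fin n)) := by
  intro i j hji hi
  obtain ⟨k, -, rfl⟩ := mem_map.1 hi
  exact mem_map.2 ⟨⟨j, lt_of_le_of_lt hji k.2⟩, mem_univ _, rfl⟩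

namespace Matrix

theorem det_submatrix_coe_map_univ {ι κ R : Type*} [Fintype ι] [DecidableEq ι] [Fintype κ]
    [DecidableEq κ] [CommRing R] (f : ι ↪ κ) (A : Matrix κ κ R) :
    (A.submatrix ((↑) : univ.map f → κ) (↑)).det = (A.submatrix f f).det := by
  let e : ι ≃ univ.map f := f.toEquivRange.trans (Equiv.subtypeEquivRight (by simp))
  rw [← det_submatrix_equiv_self e]
  rfl

theorem coeff_charpolyRev_eq_sum_minors {n R : Type*} [Fintype n] [DecidableEq n] [CommRing R]
    (M : Matrix n n R) (k : ℕ) :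
    M.charpolyRev.coeff k = (-1) ^ k * ∑ s ∈ univ.powersetCard k,
      (M.submatrix (Subtype.val : s → n) (Subtype.val : s → n)).det := by
  have h : M.charpolyRev = det (1 + (X : R[X]) • (-M).map C) := by
    rw [charpolyRev, sub_eq_add_neg, ← smul_neg, ← Matrix.map_neg C (map_neg C) M]
  rw [h, coeff_det_one_add_X_smul_eq_sum_minors, mul_sum]
  refine sum_congr rfl fun s hs => ?_
  rw [submatrix_neg, Pi.neg_apply, Pi.neg_apply, det_neg, Fintype.card_coe,
    (mem_powersetCard.mp hs).2]

end Matrix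

namespace AddValuation

def ofTopIff {K : Type*} [Field K] (v : K → WithTop ℚ) (hv0 : ∀ x : K, v x = ⊤ ↔ x = 0)
    (hvmul : ∀ x y : K, v (x * y) = v x + v y) (hvadd : ∀ x y : K, min (v x) (v y) ≤ v (x + y)) :
    AddValuation K (WithTop ℚ) :=
  AddValuation.of v ((hv0 0).2 rfl) (by
    -- `v 1` is finite and satisfies `v 1 = v 1 + v 1`
    obtain ⟨q, hq⟩ := WithTop.ne_top_iff_exists.mp ((hv0 1).not.2 one_ne_zero)
    have h := hvmul 1 1
    rw [mul_one, ← hq] at h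
    have : q = q + q := by exact_mod_cast h
    rw [← hq]
    exact_mod_cast (by linarith : q = 0)) hvadd hvmul

variable {R Γ : Type*} [LinearOrderedAddCommMonoidWithTop Γ]

theorem map_sum_eq_of_lt [Ring R] (v : AddValuation R Γ) {ι : Type*} [DecidableEq ι]
    {s : Finset ι} {f : ι → R} {j : ι} (hj : j ∈ s) (hf : ∀ i ∈ s \ {j}, v (f j) < v (f i)) :
    v (∑ i ∈ s, f i) = v (f j) := by
  rw [sum_eq_add_sum_sdiff_singleton_of_mem hj]
  obtain hempty | ⟨i, hi⟩ := (s \ {j}).eq_empty_or_nonempty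
  · rw [hempty, sum_empty, add_zero]
  · exact v.map_add_eq_of_lt_left (v.map_lt_sum (hf i hi).ne_top hf)

theorem map_prod [CommRing R] (v : AddValuation R Γ) {ι : Type*} (s : Finset ι) (f : ι → R) :
    v (∏ i ∈ s, f i) = ∑ i ∈ s, v (f i) := by
  induction s using Finset.cons_induction with
  | empty => simp
  | cons a s ha ih => rw [prod_cons, sum_cons, map_mul, ih]

theorem sum_le_map_det [CommRing R] (v : AddValuation R Γ) {ι : Type*} [Fintype ι]
    [DecidableEq ι] (A : Matrix ι ι R) (c : ι → Γ) (hc : ∀ i j, c j ≤ v (A i j)) :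
    ∑ j, c j ≤ v A.det := by
  rw [det_apply]
  refine v.map_le_sum fun σ _ => ?_
  have hsign : v (Equiv.Perm.sign σ • ∏ j, A (σ j) j) = v (∏ j, A (σ j) j) := by
    rcases Int.units_eq_one_or (Equiv.Perm.sign σ) with h | h <;> simp [h]
  rw [hsign, v.map_prod]
  exact sum_le_sum fun j _ => hc _ _

theorem map_sum_minors_eq_of_isLowerSet [CommRing R] {Γ₀ : Type*} [AddCancelCommMonoid Γ₀]
    [LinearOrder Γ₀] [IsOrderedCancelAddMonoid Γ₀] {ι : Type*} [LinearOrder ι] [Fintype ι]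
    (v : AddValuation R (WithTop Γ₀)) (A : Matrix ι ι R) {c : ι → Γ₀} (hc : StrictMono c)
    (hA : ∀ i j, (c j : WithTop Γ₀) ≤ v (A i j)) {t : Finset ι} (ht : IsLowerSet (t : Set ι))
    (hdet : v (A.submatrix ((↑) : t → ι) (↑)).det = ↑(∑ j ∈ t, c j)) :
    v (∑ s ∈ univ.powersetCard #t, (A.submatrix (Subtype.val : s → ι) Subtype.val).det) =
      ↑(∑ j ∈ t, c j) := by
  rw [v.map_sum_eq_of_lt (mem_powersetCard.2 ⟨subset_univ t, rfl⟩), hdet]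
  intro s hs
  obtain ⟨hs, hst⟩ := mem_sdiff.1 hs
  calc v (A.submatrix ((↑) : t → ι) (↑)).det = ↑(∑ j ∈ t, c j) := hdet
    _ < ↑(∑ j ∈ s, c j) := WithTop.coe_lt_coe.2 <|
        sum_lt_sum_of_isLowerSet hc ht (mem_powersetCard.1 hs).2 (by simpa using hst)
    _ = ∑ j : s, (c j : WithTop Γ₀) := by rw [WithTop.coe_sum]; exact (sum_coe_sort s _).symm
    _ ≤ v (A.submatrix ((↑) : s → ι) (↑)).det := v.sum_le_map_det _ _ fun i j => hA _ _

end AddValuation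

/-- Serre's proposition: if the leading principal `m×m` minors of `M` have valuation
`r·m(m+1)/2` and every entry in column `j` has valuation at least `r·j`, then the
coefficient `cₘ` of `tᵐ` in `det(1 - tM)` has valuation `r·m(m+1)/2`. -/
theorem serre_valuation_of_char_coeffs
    (K : Type*) [Field K] (v : K → WithTop ℚ)
    (hv0 : ∀ x : K, v x = ⊤ ↔ x = 0)
    (hvmul : ∀ x y : K, v (x * y) = v x + v y)
    (hvadd : ∀ x y : K, min (v x) (v y) ≤ v (x + y))
    (r : ℚ) (hr : 0 < r) (n : ℕ) (M : Matrix (Fin n) (Fin n) K)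
    (hminor : ∀ (m : ℕ) (h : m ≤ n), 1 ≤ m →
      v ((M.submatrix (Fin.castLE h) (Fin.castLE h)).det) =
        ((r * ((m * (m + 1) : ℚ) / 2) : ℚ) : WithTop ℚ))
    (hcol : ∀ i j : Fin n, ((r * ((j.1 + 1 : ℕ) : ℚ) : ℚ) : WithTop ℚ) ≤ v (M i j)) :
    ∀ m : ℕ, 1 ≤ m → m ≤ n →
      v (((1 : Matrix (Fin n) (Fin n) (Polynomial K)) -
            (Polynomial.X : Polynomial K) • M.map Polynomial.C).det.coeff m) =
        ((r * ((m * (m + 1) : ℚ) / 2) : ℚ) : WithTop ℚ) := by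
  intro m hm hmn
  let w := AddValuation.ofTopIff v hv0 hvmul hvadd
  let c : Fin n → ℚ := fun j => r * ((j.1 + 1 : ℕ) : ℚ)
  have hc : StrictMono c := fun i j hij => by
    simp only [c]
    gcongr
    exact hij
  let t : Finset (Fin n) := univ.map (Fin.castLEEmb hmn)
  have hcard : #t = m := by simp [t]
  have hsum : ∑ j ∈ t, c j = r * ((m * (m + 1) : ℚ) / 2) := by
    simp only [t, c, sum_map, ← mul_sum, Fin.castLEEmb_apply, Fin.val_castLE, Nat.cast_add,
      Nat.cast_one]
    rw [Fin.sum_univ_eq_sum_range (fun k : ℕ => (k : ℚ) + 1), sum_range_cast_add_one]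
  have hdet : w (M.submatrix ((↑) : t → Fin n) (↑)).det = ↑(∑ j ∈ t, c j) := by
    rw [hsum, Matrix.det_submatrix_coe_map_univ]
    exact hminor m hmn hm
  change w (M.charpolyRev.coeff m) = _
  rw [Matrix.coeff_charpolyRev_eq_sum_minors, w.map_mul, w.map_pow, w.map_neg, w.map_one,
    smul_zero, zero_add, ← hsum, ← hcard]
  exact AddValuation.map_sum_minors_eq_of_isLowerSet w M hc hcol
    (Fin.isLowerSet_map_castLEEmb hmn) hdet
end

section
/- Let M be a compact (completely continuous) operator on a p-adic Banach space given by an infinite matrix M_∞, and let Mₘ be the finite matrices formed by the first m rows and columns. Then the characteristic power series det(1 − t·Mₘ) converge coefficientwise to det(1 − t·M_∞) as m → ∞. -/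
/-!
The `tᵐ`-coefficient of `det (1 - t Mₙ)` is `(-1)ᵐ` times the sum of the principal `m × m` minors
of `Mₙ`, i.e. a partial sum of `∑_{|S| = m} det M_S` over the sets `S ⊆ {0, …, N - 1}`. In an
ultrametric field `‖det A‖ ≤ ∏ᵢ supⱼ ‖A i j‖`, so a minor containing a row `i` has norm at most
`supⱼ ‖M i j‖ · Cᵐ⁻¹`. As the rows tend to zero, the minors tend to zero along the cofinite filter,
hence the series converges unconditionally in the complete nonarchimedean field `K`, and its limit
is the limit of the truncated partial sums.
-/

open Matrix Polynomial Filter Finset Topology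

namespace Matrix

variable {R : Type*} [CommRing R]

def principalMinor {ι : Type*} [DecidableEq ι] (A : Matrix ι ι R) (S : Finset ι) : R :=
  (A.submatrix (Subtype.val : S → ι) Subtype.val).det

theorem principalMinor_submatrix {ι κ : Type*} [DecidableEq ι] [DecidableEq κ]
    (A : Matrix κ κ R) (e : ι ↪ κ) (S : Finset ι) :
    (A.submatrix e e).principalMinor S = A.principalMinor (S.map e) :=
  det_submatrix_equiv_self (S.equivMap e) (A.submatrix Subtype.val Subtype.val)

variable {n : Type*} [Fintype n] [DecidableEq n]

theorem coeff_det_one_sub_X_smul_eq_sum_principalMinor (A : Matrix n n R) (k : ℕ) :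
    (det (1 - (X : R[X]) • A.map C)).coeff k =
      (-1) ^ k * ∑ S ∈ univ.powersetCard k, A.principalMinor S := by
  have h : 1 - (X : R[X]) • A.map C = 1 + (X : R[X]) • (-A).map C := by
    rw [Matrix.map_neg _ (map_neg C), smul_neg, sub_eq_add_neg]
  rw [h, coeff_det_one_add_X_smul_eq_sum_minors, mul_sum]
  refine sum_congr rfl fun S hS => ?_
  simp only [principalMinor, submatrix_neg, Pi.neg_apply, det_neg, Fintype.card_coe,
    (mem_powersetCard.mp hS).2]

theorem coeff_det_one_sub_X_smul_truncation (M : ℕ → ℕ → R) (N k : ℕ) :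
    (det (1 - (X : R[X]) • of fun i j : Fin N => C (M i j))).coeff k =
      (-1) ^ k * ∑ S ∈ (range N).powersetCard k, (of M).principalMinor S := by
  rw [show (of fun i j : Fin N => C (M i j)) = ((of M).submatrix Fin.val Fin.val).map C from rfl,
    coeff_det_one_sub_X_smul_eq_sum_principalMinor, ← Nat.Iio_eq_range,
    ← Fin.map_valEmbedding_univ, powersetCard_map, sum_map]
  simp only [RelEmbedding.coe_toEmbedding, mapEmbedding_apply, ← principalMinor_submatrix]
  rfl

end Matrix

theorem Finset.tendsto_subtype_powerset_range (p : Finset ℕ → Prop) [DecidablePred p] :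
    Tendsto (fun N => ((range N).powerset).subtype p) atTop atTop := by
  refine tendsto_atTop_finset_of_monotone
    (subtype_mono.comp fun _ _ h => powerset_mono.mpr (range_subset_range.mpr h)) fun S => ?_
  obtain ⟨N, hN⟩ := S.1.exists_nat_subset_range
  exact ⟨N, mem_subtype.mpr (mem_powerset.mpr hN)⟩

section Ultrametric

variable {K : Type*} [NormedField K] [IsUltrametricDist K]

theorem Matrix.norm_det_le_prod_of_norm_le {ι : Type*} [Fintype ι] [DecidableEq ι]
    {A : Matrix ι ι K} {r : ι → ℝ} (h : ∀ i j, ‖A i j‖ ≤ r i) : ‖A.det‖ ≤ ∏ i, r i := by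
  rw [← det_transpose, det_apply]
  have hr : ∀ i, 0 ≤ r i := fun i => (norm_nonneg _).trans (h i i)
  refine IsUltrametricDist.norm_sum_le_of_forall_le_of_nonneg (prod_nonneg fun i _ => hr i)
    fun σ _ => ?_
  calc ‖Equiv.Perm.sign σ • ∏ i, Aᵀ (σ i) i‖ = ∏ i, ‖A i (σ i)‖ := by
        rcases Int.units_eq_one_or (Equiv.Perm.sign σ) with hσ | hσ <;> simp [hσ, norm_prod]
    _ ≤ ∏ i, r i := prod_le_prod (fun i _ => norm_nonneg _) fun i _ => h i (σ i)

theorem Matrix.norm_principalMinor_le_of_row_le {ι : Type*} [DecidableEq ι] (A : Matrix ι ι K)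
    {S : Finset ι} {i₀ : ι} (hi₀ : i₀ ∈ S) {δ C : ℝ} (hδ : ∀ j, ‖A i₀ j‖ ≤ δ)
    (hC : ∀ i j, ‖A i j‖ ≤ C) : ‖A.principalMinor S‖ ≤ δ * C ^ (S.card - 1) := by
  calc ‖A.principalMinor S‖
      ≤ ∏ i : S, Function.update (fun _ => C) ⟨i₀, hi₀⟩ δ i := by
        refine norm_det_le_prod_of_norm_le fun i j => ?_
        rcases eq_or_ne i ⟨i₀, hi₀⟩ with rfl | hi
        · simpa using hδ j
        · simpa [hi] using hC i j
    _ = δ * C ^ (S.card - 1) := by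
        rw [prod_update_of_mem (mem_univ _), prod_const, card_sdiff, card_univ, Fintype.card_coe]
        simp

theorem tendsto_principalMinor_cofinite_zero {M : ℕ → ℕ → K} {C : ℝ} (hC : ∀ i j, ‖M i j‖ ≤ C)
    (hrows : ∀ ε : ℝ, 0 < ε → ∃ N : ℕ, ∀ i ≥ N, ∀ j : ℕ, ‖M i j‖ < ε) (m : ℕ) :
    Tendsto (fun S : {S : Finset ℕ // S.card = m} => (of M).principalMinor S.1)
      cofinite (𝓝 0) := by
  refine NormedAddGroup.tendsto_nhds_zero.mpr fun ε hε => eventually_cofinite.mpr ?_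
  set C' := max C 1
  have hC' : 0 < C' := lt_max_of_lt_right one_pos
  obtain ⟨N, hN⟩ := hrows (ε / 2 / C' ^ (m - 1)) (by positivity)
  have hsmall (S : {S : Finset ℕ // S.card = m}) (hS : ¬S.1 ⊆ range N) :
      ‖(of M).principalMinor S.1‖ < ε := by
    obtain ⟨i₀, hi₀, hi₀N⟩ := not_subset.mp hS
    calc _ ≤ ε / 2 / C' ^ (m - 1) * C' ^ (S.1.card - 1) :=
          norm_principalMinor_le_of_row_le _ hi₀ (fun j => (hN i₀ (by simpa using hi₀N) j).le)
            fun i j => (hC i j).trans (le_max_left _ _)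
      _ = ε / 2 := by rw [S.2, div_mul_cancel₀ _ (by positivity)]
      _ < ε := half_lt_self hε
  refine ((range N).powerset.finite_toSet.preimage Subtype.val_injective.injOn).subset
    fun S hS => ?_
  by_contra h
  exact hS (hsmall S (by simpa only [Set.mem_preimage, mem_coe, mem_powerset] using h))

end Ultrametric

/-- Serre: for a compact operator given by an infinite matrix `M` over a complete
nonarchimedean field, the characteristic power series `det(1 - t·Mₘ)` of the finite
truncations converge coefficientwise to the Fredholm determinant `det(1 - t·M_∞)`,
whose `tᵐ`-coefficient is `(-1)^m ∑_{|S|=m} det M_S`. -/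
theorem finite_char_series_tendsto_fredholm
    (K : Type*) [NontriviallyNormedField K] [CompleteSpace K]
    (hna : ∀ x y : K, ‖x + y‖ ≤ max ‖x‖ ‖y‖)
    (M : ℕ → ℕ → K)
    (hbdd : ∃ C : ℝ, ∀ i j : ℕ, ‖M i j‖ ≤ C)
    (hcpt : ∀ ε : ℝ, 0 < ε → ∃ N : ℕ, ∀ i ≥ N, ∀ j : ℕ, ‖M i j‖ < ε) :
    ∀ m : ℕ,
      Tendsto
        (fun N : ℕ =>
          (((1 : Matrix (Fin N) (Fin N) (Polynomial K)) -
              (Polynomial.X : Polynomial K) •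
                Matrix.of (fun i j : Fin N => Polynomial.C (M i j))).det.coeff m))
        atTop
        (nhds ((-1 : K) ^ m *
          ∑' S : {S : Finset ℕ // S.card = m},
            Matrix.det (Matrix.of fun i j : (S.1 : Finset ℕ) => M i.1 j.1))) := by
  intro m
  obtain ⟨C, hC⟩ := hbdd
  have : IsUltrametricDist K := .isUltrametricDist_of_forall_norm_add_le_max_norm hna
  have hsum := (NonarchimedeanAddGroup.summable_of_tendsto_cofinite_zero
    (tendsto_principalMinor_cofinite_zero hC hcpt m)).hasSum
  refine ((hsum.comp (tendsto_subtype_powerset_range _)).const_mul ((-1) ^ m)).congr fun N => ?_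
  rw [coeff_det_one_sub_X_smul_truncation, Function.comp_apply, sum_subtype_eq_sum_filter,
    powersetCard_eq_filter]
end

section
/- For a fixed n, the n×n matrix over 𝔽₂ whose j-th column consists of the coefficients of x, x², ..., xⁿ in the polynomial x^(⌈j/2⌉)(1+x)^(n-j) (these being the generating functions col(2l+1) = x^(l+1)·y^(2l+1)·(1+x)^i/(1+x)^(2l+1) and col(2l) = x^l·y^(2l)·(1+x)^i/(1+x)^(2l) in normalized form) has determinant 1. -/
open Polynomial Matrix Finset

lemma two_X_zero : (X : Polynomial (ZMod 2)) + X = 0 := by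
  exact CharTwo.add_self_eq_zero X

lemma poly_key (a b c : ℕ) :
    ∑ m ∈ Finset.range (b + 1),
        (Nat.choose b m : ZMod 2) • (X ^ (a + m) * (1 + X) ^ (c + (b - m)) : Polynomial (ZMod 2))
      = X ^ a * (1 + X) ^ c := by
  have h : ((X + (1 + X)) ^ b : Polynomial (ZMod 2)) = 1 := by
    have : (X : Polynomial (ZMod 2)) + (1 + X) = 1 := by
      rw [add_comm 1 X, ← add_assoc, two_X_zero, zero_add]
    rw [this, one_pow]
  calc ∑ m ∈ Finset.range (b + 1),
        (Nat.choose b m : ZMod 2) • (X ^ (a + m) * (1 + X) ^ (c + (b - m)) : Polynomial (ZMod 2))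
      = (X ^ a * (1 + X) ^ c) * ∑ m ∈ Finset.range (b + 1),
          X ^ m * (1 + X) ^ (b - m) * (Nat.choose b m : Polynomial (ZMod 2)) := by
        rw [Finset.mul_sum]
        refine Finset.sum_congr rfl fun m hm => ?_
        rw [pow_add, pow_add]
        simp [Polynomial.smul_eq_C_mul, map_natCast]
        ring
    _ = X ^ a * (1 + X) ^ c := by
        rw [← add_pow, h, mul_one]

lemma poly_key2 (n a b : ℕ) (hab : a + b < n) :
    ∑ k ∈ Finset.range n,
        (X ^ a * (1 + X) ^ b : Polynomial (ZMod 2)).coeff k •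
          (X ^ k * (1 + X) ^ (n - 1 - k) : Polynomial (ZMod 2))
      = X ^ a * (1 + X) ^ (n - 1 - (a + b)) := by
  have hc : ∀ k, (X ^ a * (1 + X) ^ b : Polynomial (ZMod 2)).coeff k
      = if a ≤ k then (Nat.choose b (k - a) : ZMod 2) else 0 := by
    intro k
    rw [coeff_X_pow_mul', ]
    split_ifs with h
    · rw [coeff_one_add_X_pow]
    · rfl
  have hsub : Finset.Icc a (a + b) ⊆ Finset.range n := by
    intro k hk
    simp only [Finset.mem_Icc] at hk
    simp only [Finset.mem_range]
    omega
  rw [← Finset.sum_subset hsub]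
  · rw [← Finset.Ico_add_one_right_eq_Icc, Finset.sum_Ico_eq_sum_range]
    have : a + b + 1 - a = b + 1 := by omega
    rw [this]
    rw [← poly_key a b (n - 1 - (a + b))]
    refine Finset.sum_congr rfl fun m hm => ?_
    simp only [Finset.mem_range] at hm
    rw [hc]
    have h1 : a ≤ a + m := by omega
    rw [if_pos h1]
    have h2 : a + m - a = m := by omega
    have h3 : n - 1 - (a + m) = n - 1 - (a + b) + (b - m) := by omega
    rw [h2, h3]
  · intro k hk hk'
    simp only [Finset.mem_range] at hk
    simp only [Finset.mem_Icc, not_and, not_le] at hk'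
    rw [hc]
    split_ifs with h
    · rw [Nat.choose_eq_zero_of_lt (by omega), Nat.cast_zero, zero_smul]
    · rw [zero_smul]

lemma coeff_formula (a b k : ℕ) :
    (X ^ a * (1 + X) ^ b : Polynomial (ZMod 2)).coeff k
      = if a ≤ k then (Nat.choose b (k - a) : ZMod 2) else 0 := by
  rw [coeff_X_pow_mul']
  split_ifs with h
  · rw [coeff_one_add_X_pow]
  · rfl


/-- The `n×n` matrix over `𝔽₂` whose `(i,j)`-entry is the coefficient of `xⁱ`
(for `1 ≤ i ≤ n`) in `C_j = x^(⌈j/2⌉)·(1+x)^(n-j)` (for `1 ≤ j ≤ n`) has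
determinant `1`. -/
theorem det_column_matrix_eq_one (n : ℕ) (hn : 1 ≤ n) :
    Matrix.det
      (Matrix.of fun i j : Fin n =>
        ((X ^ ((j.1 + 1 + 1) / 2) * (1 + X) ^ (n - (j.1 + 1)) :
            Polynomial (ZMod 2))).coeff (i.1 + 1)) = 1 := by
  set A : Matrix (Fin n) (Fin n) (ZMod 2) := Matrix.of fun i k : Fin n =>
    (X ^ (k : ℕ) * (1 + X) ^ (n - 1 - (k : ℕ)) : Polynomial (ZMod 2)).coeff i with hA
  set B : Matrix (Fin n) (Fin n) (ZMod 2) := Matrix.of fun k j : Fin n =>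
    (X ^ ((j.1 + 2) / 2 - 1) * (1 + X) ^ ((j.1 + 1) / 2) : Polynomial (ZMod 2)).coeff k with hB
  have hfac : (Matrix.of fun i j : Fin n =>
        ((X ^ ((j.1 + 1 + 1) / 2) * (1 + X) ^ (n - (j.1 + 1)) :
            Polynomial (ZMod 2))).coeff (i.1 + 1)) = A * B := by
    ext i j
    set a := (j.1 + 2) / 2 - 1 with ha
    set b := (j.1 + 1) / 2 with hb
    have hab : a + b = j.1 := by omega
    have ha1 : a + 1 = (j.1 + 1 + 1) / 2 := by omega
    have hexp : n - (j.1 + 1) = n - 1 - (a + b) := by omega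
    have habn : a + b < n := by omega
    -- RHS
    rw [Matrix.mul_apply]
    have key := congrArg (fun p => Polynomial.coeff p i.1) (poly_key2 n a b habn)
    simp only [Polynomial.finset_sum_coeff, Polynomial.coeff_smul, smul_eq_mul] at key
    have : ∑ k : Fin n, A i k * B k j
        = ∑ k ∈ Finset.range n,
            (X ^ a * (1 + X) ^ b : Polynomial (ZMod 2)).coeff k *
              (X ^ k * (1 + X) ^ (n - 1 - k) : Polynomial (ZMod 2)).coeff i := by
      rw [Finset.sum_range fun k => _]
      refine Finset.sum_congr rfl fun k _ => ?_
      simp only [hA, hB, Matrix.of_apply, ← ha, ← hb]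
      ring
    rw [Matrix.of_apply, this, key, hexp, ← ha1]
    rw [coeff_formula, coeff_formula]
    have e1 : i.1 + 1 - (a + 1) = i.1 - a := by omega
    rw [e1]
    by_cases h : a ≤ i.1
    · rw [if_pos (by omega), if_pos h]
    · rw [if_neg (by omega), if_neg h]
  rw [hfac, Matrix.det_mul]
  have hdA : A.det = 1 := by
    rw [Matrix.det_of_lowerTriangular A]
    · refine Finset.prod_eq_one fun i _ => ?_
      simp only [hA, Matrix.of_apply, coeff_formula, le_refl, if_pos, Nat.sub_self,
        Nat.choose_zero_right, Nat.cast_one]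
    · intro i j hij
      simp only [OrderDual.toDual_lt_toDual] at hij
      simp only [hA, Matrix.of_apply, coeff_formula]
      rw [if_neg (by exact_mod_cast not_le.mpr hij)]
  have hdB : B.det = 1 := by
    rw [Matrix.det_of_upperTriangular]
    · refine Finset.prod_eq_one fun j _ => ?_
      set a := (j.1 + 2) / 2 - 1 with ha
      set b := (j.1 + 1) / 2 with hb
      have hab : a + b = j.1 := by omega
      simp only [hB, Matrix.of_apply, ← ha, ← hb, coeff_formula]
      rw [if_pos (by omega), show j.1 - a = b from by omega, Nat.choose_self, Nat.cast_one]
    · intro k j hkj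
      simp only [id_eq] at hkj
      set a := (j.1 + 2) / 2 - 1 with ha
      set b := (j.1 + 1) / 2 with hb
      have hab : a + b = j.1 := by omega
      have hkj' : j.1 < k.1 := hkj
      simp only [hB, Matrix.of_apply, ← ha, ← hb, coeff_formula]
      split_ifs with h
      · rw [Nat.choose_eq_zero_of_lt (by omega), Nat.cast_zero]
      · rfl
  rw [hdA, hdB, mul_one]
end
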